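/- For every real z ≠ 0, g₁(z)/z > 0; equivalently, g₁(z) > 0 for z > 0 and g₁(z) < 0 for z < 0. Consequently the integrand t(q)⁴·g₁(β(q²−μ))/(q²−μ) appearing in the formula for the Ginzburg–Landau coefficient λ₃ is pointwise positive wherever t(q) ≠ 0 and q² ≠ μ, so λ₃ > 0. -/
import Mathlib


open MeasureTheory

/-- `g₁(z) = (e^{2z} − 2z·e^z − 1)/(z²(1+e^z)²)`. -/
noncomputable def g1 (z : ℝ) : ℝ :=
  (Real.exp (2 * z) - 2 * z * Real.exp z - 1) / (z ^ 2 * (1 + Real.exp z) ^ 2)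

lemma num_eq (z : ℝ) :
    Real.exp (2 * z) - 2 * z * Real.exp z - 1
      = Real.exp z * (2 * (Real.sinh z - z)) := by
  have h1 : Real.exp (2 * z) = Real.exp z * Real.exp z := by
    rw [← Real.exp_add]; ring_nf
  have h2 : Real.exp z * Real.exp (-z) = 1 := by rw [← Real.exp_add]; simp
  rw [Real.sinh_eq]
  nlinarith [h1, h2]

lemma denom_pos {z : ℝ} (hz : z ≠ 0) : 0 < z ^ 2 * (1 + Real.exp z) ^ 2 := by
  have h1 : 0 < z ^ 2 := by positivity
  have h2 : 0 < 1 + Real.exp z := by positivity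
  positivity

lemma g1_pos {z : ℝ} (hz : 0 < z) : 0 < g1 z := by
  unfold g1
  rw [num_eq]
  apply div_pos _ (denom_pos hz.ne')
  have := Real.self_lt_sinh_iff.mpr hz
  have h := Real.exp_pos z
  nlinarith

lemma g1_neg {z : ℝ} (hz : z < 0) : g1 z < 0 := by
  unfold g1
  rw [num_eq]
  apply div_neg_of_neg_of_pos _ (denom_pos hz.ne)
  have h1 : Real.sinh z < z := Real.sinh_lt_self_iff.mpr hz
  have h := Real.exp_pos z
  nlinarith

lemma g1_sign (z : ℝ) (hz : z ≠ 0) : 0 < g1 z / z := by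
  rcases hz.lt_or_gt with h | h
  · exact div_pos_of_neg_of_neg (g1_neg h) h
  · exact div_pos (g1_pos h) h

lemma integrand_pos {β x : ℝ} (hβ : 0 < β) {c : ℝ} (hc : c ≠ 0) (hx : x ≠ 0) :
    0 < c ^ 4 * g1 (β * x) / x := by
  have hc4 : 0 < c ^ 4 := by positivity
  rcases hx.lt_or_gt with h | h
  · have : g1 (β * x) < 0 := g1_neg (by nlinarith)
    exact div_pos_of_neg_of_neg (by nlinarith) h
  · have : 0 < g1 (β * x) := g1_pos (by nlinarith)
    exact div_pos (by nlinarith) h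

theorem g1_div_self_pos_and_lambda3_pos :
    (∀ z : ℝ, z ≠ 0 → 0 < g1 z / z) ∧
    (∀ z : ℝ, (0 < z → 0 < g1 z) ∧ (z < 0 → g1 z < 0)) ∧
    (∀ (β μ : ℝ) (t : EuclideanSpace ℝ (Fin 3) → ℝ) (q : EuclideanSpace ℝ (Fin 3)),
      0 < β → t q ≠ 0 → ‖q‖ ^ 2 ≠ μ →
      0 < t q ^ 4 * g1 (β * (‖q‖ ^ 2 - μ)) / (‖q‖ ^ 2 - μ)) ∧
    (∀ (Tc μ lam0 : ℝ) (t : EuclideanSpace ℝ (Fin 3) → ℝ),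
      0 < Tc → 0 < lam0 →
      Integrable (fun q : EuclideanSpace ℝ (Fin 3) =>
        t q ^ 4 * g1 (Tc⁻¹ * (‖q‖ ^ 2 - μ)) / (‖q‖ ^ 2 - μ)) →
      0 < volume {q : EuclideanSpace ℝ (Fin 3) | t q ≠ 0} →
      0 < lam0⁻¹ * (1 / (16 * Tc ^ 2)) *
        ∫ q : EuclideanSpace ℝ (Fin 3),
          t q ^ 4 * g1 (Tc⁻¹ * (‖q‖ ^ 2 - μ)) / (‖q‖ ^ 2 - μ) / (2 * Real.pi) ^ 3) := by
  refine ⟨g1_sign, fun z => ⟨fun h => g1_pos h, fun h => g1_neg h⟩, ?_, ?_⟩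
  · intro β μ t q hβ ht hq
    exact integrand_pos hβ ht (sub_ne_zero_of_ne hq)
  · intro Tc μ lam0 t hTc hlam hint hsupp
    set f : EuclideanSpace ℝ (Fin 3) → ℝ :=
      fun q => t q ^ 4 * g1 (Tc⁻¹ * (‖q‖ ^ 2 - μ)) / (‖q‖ ^ 2 - μ) with hf
    have hβ : (0:ℝ) < Tc⁻¹ := inv_pos.mpr hTc
    have hnn : 0 ≤ f := by
      intro q
      by_cases hq : ‖q‖ ^ 2 - μ = 0
      · simp [hf, hq]
      · by_cases ht : t q = 0
        · simp [hf, ht]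
        · exact (integrand_pos hβ ht hq).le
    -- the set where ‖q‖² = μ has measure zero
    have hS : volume {q : EuclideanSpace ℝ (Fin 3) | ‖q‖ ^ 2 = μ} = 0 := by
      by_cases hμ : 0 ≤ μ
      · have : {q : EuclideanSpace ℝ (Fin 3) | ‖q‖ ^ 2 = μ}
            = Metric.sphere (0 : EuclideanSpace ℝ (Fin 3)) (Real.sqrt μ) := by
          ext q
          simp only [Set.mem_setOf_eq, Metric.mem_sphere, dist_zero_right]
          constructor
          · intro h
            rw [← h, Real.sqrt_sq (norm_nonneg q)]
          · intro h
            rw [h, Real.sq_sqrt hμ]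
        rw [this]
        exact Measure.addHaar_sphere volume 0 _
      · have : {q : EuclideanSpace ℝ (Fin 3) | ‖q‖ ^ 2 = μ} = ∅ := by
          ext q
          simp only [Set.mem_setOf_eq, Set.mem_empty_iff_false, iff_false]
          intro h
          exact hμ (h ▸ by positivity)
        simp [this]
    have hsub : {q : EuclideanSpace ℝ (Fin 3) | t q ≠ 0}
          \ {q : EuclideanSpace ℝ (Fin 3) | ‖q‖ ^ 2 = μ} ⊆ Function.support f := by
      intro q hq
      obtain ⟨ht, hq2⟩ := hq
      have hq2' : ‖q‖ ^ 2 - μ ≠ 0 := sub_ne_zero_of_ne hq2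
      exact (integrand_pos hβ ht hq2').ne'
    have hsupp' : 0 < volume (Function.support f) := by
      refine lt_of_lt_of_le ?_ (measure_mono hsub)
      rwa [measure_diff_null hS]
    have hI : 0 < ∫ q, f q := by
      rw [integral_pos_iff_support_of_nonneg hnn hint]
      exact hsupp'
    have hI' : 0 < ∫ q, f q / (2 * Real.pi) ^ 3 := by
      rw [integral_div]
      have : (0:ℝ) < (2 * Real.pi) ^ 3 := by positivity
      exact div_pos hI this
    have h1 : (0:ℝ) < lam0⁻¹ := inv_pos.mpr hlam
    have h2 : (0:ℝ) < 1 / (16 * Tc ^ 2) := by positivity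
    exact mul_pos (mul_pos h1 h2) hI'
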